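/- Let φ be holomorphic on ℂ∖ℝ and suppose there exist a finite complex Borel measure λ on ℝ and λ∞ ∈ ℂ with φ(w) = (φ(i)+φ(−i))/2 + λ∞·w + ∫_ℝ (1+s·w)/(s−w) dλ(s) for all w ∈ ℂ∖ℝ. Then for each y > 0 the function x ↦ (φ(x+iy) − φ(x−iy))/(1+x²) is continuous and absolutely integrable on ℝ, with ∫_{−∞}^{∞} |φ(x+iy) − φ(x−iy)|/(1+x²) dx ≤ 2π·y·(|λ|(ℝ) + |λ∞|) + 2π·|λ|(ℝ), and ∫_{−∞}^{∞} (φ(x+iy) − φ(x−iy))/(1+x²) dx = 2πi·λ∞·y + 2πi·(y+1)·∫_ℝ (s²+1)/(s²+(y+1)²) dλ(s), where |λ| denotes the total variation measure of λ. -/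

import Mathlib

/-!
Subtracting the representation at `x - iy` from the one at `x + iy` cancels the constant term
and turns the kernel `(1 + s w) / (s - w)` into a Poisson kernel:
`φ(x + iy) - φ(x - iy) = 2iy λ∞ + 2iy ∫ (1 + s²) / ((s - x)² + y²) dλ(s)`.
After dividing by `1 + x²`, Fubini reduces both the integrability and the value to the
convolution identity for two Cauchy densities,
`∫ dx / (((x - s)² + y²)(x² + 1)) = π (y + 1) / (y (s² + (y + 1)²))`,
and since `(1 + s²) / (s² + (y + 1)²) ≤ 1` the `x`-integral of the weight is at most
`π (y + 1) / y`, which gives the norm bound.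
-/

open MeasureTheory Filter Topology Real

lemma tendsto_log_sub_log_cocompact (s : ℝ) {c : ℝ} (hc : 0 < c) :
    Tendsto (fun x : ℝ => log ((x - s) ^ 2 + c) - log (x ^ 2 + 1)) (cocompact ℝ) (𝓝 0) := by
  have hr : ContinuousAt
      (fun t : ℝ => log ((1 - 2 * s * t + (s ^ 2 + c) * t ^ 2) / (1 + t ^ 2))) 0 :=
    ContinuousAt.log (by fun_prop (disch := positivity)) (by norm_num)
  have hinv : Tendsto (fun x : ℝ => x⁻¹) (cocompact ℝ) (𝓝 0) :=
    Metric.cobounded_eq_cocompact (α := ℝ) ▸ tendsto_inv₀_cobounded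
  have h := hr.tendsto.comp hinv
  simp only [Function.comp_def, mul_zero, sub_zero, add_zero, ne_eq, OfNat.ofNat_ne_zero,
    not_false_eq_true, zero_pow, div_one, log_one] at h
  refine h.congr' ?_
  filter_upwards [(isCompact_singleton (x := (0 : ℝ))).compl_mem_cocompact] with x hx
  have hx : x ≠ 0 := hx
  rw [← log_div (by positivity) (by positivity)]
  congr 1
  field_simp
  ring

lemma tendsto_arctan_sub_div_atTop (s : ℝ) {y : ℝ} (hy : 0 < y) :
    Tendsto (fun x : ℝ => arctan ((x - s) / y)) atTop (𝓝 (π / 2)) := by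
  have h : Tendsto (fun x : ℝ => (x - s) / y) atTop atTop :=
    (tendsto_atTop_add_const_right atTop (-s) tendsto_id).atTop_div_const hy
  exact (tendsto_arctan_atTop.mono_right nhdsWithin_le_nhds).comp h

lemma tendsto_arctan_sub_div_atBot (s : ℝ) {y : ℝ} (hy : 0 < y) :
    Tendsto (fun x : ℝ => arctan ((x - s) / y)) atBot (𝓝 (-(π / 2))) := by
  have h : Tendsto (fun x : ℝ => (x - s) / y) atBot atBot :=
    (tendsto_atBot_add_const_right atBot (-s) tendsto_id).atBot_div_const hy
  exact (tendsto_arctan_atBot.mono_right nhdsWithin_le_nhds).comp h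

lemma inv_sub_sq_add_sq_mul_le {y : ℝ} (hy : y ≠ 0) (s x : ℝ) :
    (((x - s) ^ 2 + y ^ 2) * (x ^ 2 + 1))⁻¹ ≤ (y ^ 2)⁻¹ * (1 + x ^ 2)⁻¹ := by
  rw [← mul_inv]
  apply inv_anti₀ (by positivity)
  nlinarith [sq_nonneg (x - s), sq_nonneg x]

lemma integrable_inv_sub_sq_add_sq_mul {y : ℝ} (hy : y ≠ 0) (s : ℝ) :
    Integrable (fun x : ℝ => (((x - s) ^ 2 + y ^ 2) * (x ^ 2 + 1))⁻¹) :=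
  (integrable_inv_one_add_sq.const_mul (y ^ 2)⁻¹).mono' (by fun_prop (disch := positivity))
    (ae_of_all _ fun x => (Real.norm_of_nonneg (by positivity)).trans_le
      (inv_sub_sq_add_sq_mul_le hy s x))

lemma integral_inv_sub_sq_add_sq_mul_of_ne_zero {s y : ℝ} (hs : s ≠ 0) (hy : 0 < y) :
    ∫ x : ℝ, (((x - s) ^ 2 + y ^ 2) * (x ^ 2 + 1))⁻¹
      = π * (y + 1) / (y * (s ^ 2 + (y + 1) ^ 2)) := by
  have hQ : (s ^ 2 + (y + 1) ^ 2) * (s ^ 2 + (y - 1) ^ 2) ≠ 0 := by positivity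
  -- `F` comes from partial fractions, whose common denominator `hQ` vanishes at `(s, y) = (0, 1)`.
  set F : ℝ → ℝ := fun x => (-s * (log ((x - s) ^ 2 + y ^ 2) - log (x ^ 2 + 1))
      + (s ^ 2 + 1 - y ^ 2) / y * arctan ((x - s) / y) + (s ^ 2 + y ^ 2 - 1) * arctan x)
      / ((s ^ 2 + (y + 1) ^ 2) * (s ^ 2 + (y - 1) ^ 2))
  have hF : ∀ x, HasDerivAt F ((((x - s) ^ 2 + y ^ 2) * (x ^ 2 + 1))⁻¹) x := by
    intro x
    have h1 : HasDerivAt (fun x : ℝ => (x - s) ^ 2 + y ^ 2) (2 * (x - s)) x := by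
      simpa using (((hasDerivAt_id x).sub_const s).pow 2).add_const (y ^ 2)
    have h2 : HasDerivAt (fun x : ℝ => x ^ 2 + 1) (2 * x) x := by
      simpa using (hasDerivAt_pow 2 x).add_const 1
    have h3 : HasDerivAt (fun x : ℝ => (x - s) / y) (1 / y) x := by
      simpa using ((hasDerivAt_id x).sub_const s).div_const y
    have h := ((((h1.log (by positivity)).sub (h2.log (by positivity))).const_mul (-s)).add
      ((h3.arctan).const_mul ((s ^ 2 + 1 - y ^ 2) / y))).add
      ((hasDerivAt_arctan x).const_mul (s ^ 2 + y ^ 2 - 1)) |>.div_const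
      ((s ^ 2 + (y + 1) ^ 2) * (s ^ 2 + (y - 1) ^ 2))
    refine h.congr_deriv ?_
    have : (x - s) ^ 2 + y ^ 2 ≠ 0 := by positivity
    have : y ≠ 0 := hy.ne'
    field_simp
    ring
  have hlog := tendsto_log_sub_log_cocompact s (pow_pos hy 2)
  have htop := ((((hlog.mono_left atTop_le_cocompact).const_mul (-s)).add
    ((tendsto_arctan_sub_div_atTop s hy).const_mul ((s ^ 2 + 1 - y ^ 2) / y))).add
    ((tendsto_arctan_atTop.mono_right nhdsWithin_le_nhds).const_mul (s ^ 2 + y ^ 2 - 1))).div_const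
    ((s ^ 2 + (y + 1) ^ 2) * (s ^ 2 + (y - 1) ^ 2))
  have hbot := ((((hlog.mono_left atBot_le_cocompact).const_mul (-s)).add
    ((tendsto_arctan_sub_div_atBot s hy).const_mul ((s ^ 2 + 1 - y ^ 2) / y))).add
    ((tendsto_arctan_atBot.mono_right nhdsWithin_le_nhds).const_mul (s ^ 2 + y ^ 2 - 1))).div_const
    ((s ^ 2 + (y + 1) ^ 2) * (s ^ 2 + (y - 1) ^ 2))
  rw [integral_of_hasDerivAt_of_tendsto hF (integrable_inv_sub_sq_add_sq_mul hy.ne' s) hbot htop]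
  field_simp
  ring

lemma integral_inv_sub_sq_add_sq_mul (s : ℝ) {y : ℝ} (hy : 0 < y) :
    ∫ x : ℝ, (((x - s) ^ 2 + y ^ 2) * (x ^ 2 + 1))⁻¹
      = π * (y + 1) / (y * (s ^ 2 + (y + 1) ^ 2)) := by
  -- Both sides are continuous in `s` (dominated convergence), and agree off `s = 0`.
  have hlhs : Continuous fun s : ℝ => ∫ x : ℝ, (((x - s) ^ 2 + y ^ 2) * (x ^ 2 + 1))⁻¹ :=
    continuous_of_dominated (fun s => (by fun_prop (disch := intro; positivity) :
        Continuous fun x : ℝ => (((x - s) ^ 2 + y ^ 2) * (x ^ 2 + 1))⁻¹).aestronglyMeasurable)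
      (fun s => ae_of_all _ fun x => (Real.norm_of_nonneg (by positivity)).trans_le
        (inv_sub_sq_add_sq_mul_le hy.ne' s x))
      (integrable_inv_one_add_sq.const_mul _)
      (ae_of_all _ fun x => by fun_prop (disch := intro; positivity))
  have hrhs : Continuous fun s : ℝ => π * (y + 1) / (y * (s ^ 2 + (y + 1) ^ 2)) := by
    fun_prop (disch := intro; positivity)
  exact congrFun (hlhs.ext_on (dense_compl_singleton 0) hrhs
    fun s hs => integral_inv_sub_sq_add_sq_mul_of_ne_zero hs hy) s

lemma integral_norm_smul_const {α E : Type*} [MeasurableSpace α] {ν : Measure α}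
    [NormedAddCommGroup E] [NormedSpace ℝ E] {k : α → ℝ} (hk : ∀ x, 0 ≤ k x) (v : E) :
    ∫ x, ‖k x • v‖ ∂ν = (∫ x, k x ∂ν) * ‖v‖ := by
  simp_rw [norm_smul, Real.norm_of_nonneg (hk _)]
  exact integral_mul_const _ _

section KernelFubini

variable {α β E : Type*} [MeasurableSpace α] [MeasurableSpace β] {ν : Measure α} {μ : Measure β}
  [SFinite ν] [SFinite μ] [NormedAddCommGroup E] [NormedSpace ℝ E]
  {k : α → β → ℝ} {g : β → E} {C : ℝ}

lemma integrable_prod_smul_of_integral_le (hk : ∀ x s, 0 ≤ k x s)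
    (hkm : AEStronglyMeasurable (Function.uncurry k) (ν.prod μ))
    (hki : ∀ s, Integrable (k · s) ν) (hkC : ∀ s, ∫ x, k x s ∂ν ≤ C) (hg : Integrable g μ) :
    Integrable (fun p : α × β => k p.1 p.2 • g p.2) (ν.prod μ) := by
  have hm : AEStronglyMeasurable (fun p : α × β => k p.1 p.2 • g p.2) (ν.prod μ) :=
    hkm.smul hg.aestronglyMeasurable.comp_snd
  refine (integrable_prod_iff' hm).2 ⟨ae_of_all _ fun s => (hki s).smul_const (g s), ?_⟩
  refine (hg.norm.const_mul C).mono' hm.norm.prod_swap.integral_prod_right'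
    (ae_of_all _ fun s => ?_)
  dsimp only
  rw [Real.norm_of_nonneg (integral_nonneg fun x => norm_nonneg _),
    integral_norm_smul_const (hk · s)]
  exact mul_le_mul_of_nonneg_right (hkC s) (norm_nonneg _)

lemma integral_norm_integral_smul_le (hk : ∀ x s, 0 ≤ k x s)
    (hkm : AEStronglyMeasurable (Function.uncurry k) (ν.prod μ))
    (hki : ∀ s, Integrable (k · s) ν) (hkC : ∀ s, ∫ x, k x s ∂ν ≤ C) (hg : Integrable g μ) :
    ∫ x, ‖∫ s, k x s • g s ∂μ‖ ∂ν ≤ C * ∫ s, ‖g s‖ ∂μ := by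
  have hint := integrable_prod_smul_of_integral_le hk hkm hki hkC hg
  calc ∫ x, ‖∫ s, k x s • g s ∂μ‖ ∂ν
      ≤ ∫ x, ∫ s, ‖k x s • g s‖ ∂μ ∂ν :=
        integral_mono hint.integral_prod_left.norm hint.norm.integral_prod_left
          fun x => norm_integral_le_integral_norm _
    _ = ∫ s, (∫ x, k x s ∂ν) * ‖g s‖ ∂μ := by
        rw [integral_integral_swap hint.norm]
        exact integral_congr_ae (ae_of_all _ fun s => integral_norm_smul_const (hk · s) (g s))
    _ ≤ ∫ s, C * ‖g s‖ ∂μ := by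
        refine integral_mono_of_nonneg (ae_of_all _ fun s => ?_) (hg.norm.const_mul C)
          (ae_of_all _ fun s => mul_le_mul_of_nonneg_right (hkC s) (norm_nonneg _))
        exact mul_nonneg (integral_nonneg fun x => hk x s) (norm_nonneg _)
    _ = C * ∫ s, ‖g s‖ ∂μ := integral_const_mul _ _

lemma integral_integral_smul_swap [CompleteSpace E] (hk : ∀ x s, 0 ≤ k x s)
    (hkm : AEStronglyMeasurable (Function.uncurry k) (ν.prod μ))
    (hki : ∀ s, Integrable (k · s) ν) (hkC : ∀ s, ∫ x, k x s ∂ν ≤ C) (hg : Integrable g μ) :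
    ∫ x, ∫ s, k x s • g s ∂μ ∂ν = ∫ s, (∫ x, k x s ∂ν) • g s ∂μ := by
  rw [integral_integral_swap (integrable_prod_smul_of_integral_le hk hkm hki hkC hg)]
  simp_rw [integral_smul_const]

end KernelFubini

lemma ofReal_sub_ne_zero {w : ℂ} (hw : w.im ≠ 0) (s : ℝ) : (s : ℂ) - w ≠ 0 := by
  intro h
  apply hw
  simpa using congrArg Complex.im h

lemma norm_one_add_mul_div_sub_le {w : ℂ} (hw : w.im ≠ 0) (s : ℝ) :
    ‖(1 + (s : ℂ) * w) / ((s : ℂ) - w)‖ ≤ ‖w‖ + ‖w ^ 2 + 1‖ / |w.im| := by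
  have hsw := ofReal_sub_ne_zero hw s
  have h : (1 + (s : ℂ) * w) / ((s : ℂ) - w) = w + (w ^ 2 + 1) / ((s : ℂ) - w) := by
    field_simp
    ring
  rw [h]
  refine (norm_add_le _ _).trans (add_le_add_right ?_ _)
  rw [norm_div]
  refine div_le_div_of_nonneg_left (norm_nonneg _) (abs_pos.2 hw) ?_
  simpa using Complex.abs_im_le_norm ((s : ℂ) - w)

lemma integrable_one_add_mul_div_sub_mul {μ : Measure ℝ} {g : ℝ → ℂ} (hg : Integrable g μ)
    {w : ℂ} (hw : w.im ≠ 0) :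
    Integrable (fun s : ℝ => (1 + (s : ℂ) * w) / ((s : ℂ) - w) * g s) μ :=
  hg.bdd_mul (Continuous.aestronglyMeasurable (by fun_prop (disch := exact ofReal_sub_ne_zero hw)))
    (ae_of_all _ (norm_one_add_mul_div_sub_le hw))

noncomputable def poissonWeight (y x s : ℝ) : ℝ :=
  (1 + s ^ 2) * (((x - s) ^ 2 + y ^ 2) * (x ^ 2 + 1))⁻¹

lemma poissonWeight_nonneg (y x s : ℝ) : 0 ≤ poissonWeight y x s := by
  unfold poissonWeight
  positivity

lemma continuous_poissonWeight {y : ℝ} (hy : y ≠ 0) :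
    Continuous (Function.uncurry (poissonWeight y)) := by
  unfold poissonWeight
  fun_prop (disch := intro; positivity)

lemma kernel_sub_div_one_add_sq {y : ℝ} (hy : y ≠ 0) (x s : ℝ) :
    ((1 + (s : ℂ) * (x + y * Complex.I)) / ((s : ℂ) - (x + y * Complex.I))
      - (1 + (s : ℂ) * (x - y * Complex.I)) / ((s : ℂ) - (x - y * Complex.I))) / (1 + (x : ℂ) ^ 2)
      = 2 * Complex.I * y * poissonWeight y x s := by
  have h₁ : (s : ℂ) - (x + y * Complex.I) ≠ 0 := ofReal_sub_ne_zero (by simpa using hy) s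
  have h₂ : (s : ℂ) - (x - y * Complex.I) ≠ 0 := ofReal_sub_ne_zero (by simpa using hy) s
  have h₃ : ((x - s) ^ 2 + y ^ 2 : ℂ) ≠ 0 := by
    exact_mod_cast (by positivity : (x - s) ^ 2 + y ^ 2 ≠ 0)
  have h₄ : (1 + x ^ 2 : ℂ) ≠ 0 := by exact_mod_cast (by positivity : 1 + x ^ 2 ≠ 0)
  have h₅ : (x ^ 2 + 1 : ℂ) ≠ 0 := by exact_mod_cast (by positivity : x ^ 2 + 1 ≠ 0)
  unfold poissonWeight
  push_cast
  field_simp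
  linear_combination
    (2 * (y : ℂ) ^ 3 * Complex.I * ((s : ℂ) ^ 2 + 1) * ((x : ℂ) ^ 2 + 1)) * Complex.I_sq

lemma integrable_poissonWeight {y : ℝ} (hy : y ≠ 0) (s : ℝ) : Integrable (poissonWeight y · s) :=
  (integrable_inv_sub_sq_add_sq_mul hy s).const_mul (1 + s ^ 2)

lemma integral_poissonWeight {y : ℝ} (hy : 0 < y) (s : ℝ) :
    ∫ x, poissonWeight y x s = π * (y + 1) / y * ((s ^ 2 + 1) / (s ^ 2 + (y + 1) ^ 2)) := by
  simp only [poissonWeight]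
  rw [integral_const_mul, integral_inv_sub_sq_add_sq_mul s hy]
  field_simp
  ring

lemma integral_poissonWeight_le {y : ℝ} (hy : 0 < y) (s : ℝ) :
    ∫ x, poissonWeight y x s ≤ π * (y + 1) / y := by
  rw [integral_poissonWeight hy]
  refine mul_le_of_le_one_right (by positivity) ((div_le_one (by positivity)).2 ?_)
  nlinarith

lemma continuous_sub_div_one_add_sq {φ : ℂ → ℂ} (hφ : ContinuousOn φ {z : ℂ | z.im ≠ 0})
    {y : ℝ} (hy : y ≠ 0) :
    Continuous fun x : ℝ =>
      (φ (x + y * Complex.I) - φ (x - y * Complex.I)) / (1 + (x : ℂ) ^ 2) := by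
  have hw₁ : Continuous fun x : ℝ => φ (x + y * Complex.I) :=
    hφ.comp_continuous (by fun_prop) fun x => by simpa using hy
  have hw₂ : Continuous fun x : ℝ => φ (x - y * Complex.I) :=
    hφ.comp_continuous (by fun_prop) fun x => by simpa using hy
  exact (hw₁.sub hw₂).div (by fun_prop) fun x => by exact_mod_cast (by positivity : 1 + x ^ 2 ≠ 0)

lemma norm_one_add_ofReal_sq (x : ℝ) : ‖1 + (x : ℂ) ^ 2‖ = 1 + x ^ 2 := by
  rw [show 1 + (x : ℂ) ^ 2 = ((1 + x ^ 2 : ℝ) : ℂ) by push_cast; rfl]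
  exact Complex.norm_of_nonneg (by positivity)

lemma integrable_ofReal_inv_one_add_sq : Integrable fun x : ℝ => (((1 + x ^ 2)⁻¹ : ℝ) : ℂ) :=
  integrable_inv_one_add_sq.ofReal

-- The representing measure is `λ = g • μ`, so `|λ|(ℝ) = ∫ ‖g‖ dμ`, and `lam` is `λ∞`.
def HasRepresentingMeasure (φ : ℂ → ℂ) (μ : Measure ℝ) (g : ℝ → ℂ) (lam : ℂ) : Prop :=
  ∀ w : ℂ, w.im ≠ 0 →
    φ w = (φ Complex.I + φ (-Complex.I)) / 2 + lam * w
      + ∫ s, ((1 + (s : ℂ) * w) / ((s : ℂ) - w)) * g s ∂μ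

section Representation

variable {φ : ℂ → ℂ} {μ : Measure ℝ} {g : ℝ → ℂ} {lam : ℂ} {y : ℝ}

lemma HasRepresentingMeasure.sub_div_one_add_sq_eq (hrep : HasRepresentingMeasure φ μ g lam)
    (hg : Integrable g μ) (hy : y ≠ 0) (x : ℝ) :
    (φ (x + y * Complex.I) - φ (x - y * Complex.I)) / (1 + (x : ℂ) ^ 2)
      = 2 * Complex.I * y * lam * ((1 + x ^ 2)⁻¹ : ℝ)
        + 2 * Complex.I * y * ∫ s, poissonWeight y x s • g s ∂μ := by
  have hw₁ : ((x : ℂ) + y * Complex.I).im ≠ 0 := by simpa using hy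
  have hw₂ : ((x : ℂ) - y * Complex.I).im ≠ 0 := by simpa using hy
  have hK (s : ℝ) : ((1 + (s : ℂ) * (x + y * Complex.I)) / ((s : ℂ) - (x + y * Complex.I)) * g s
      - (1 + (s : ℂ) * (x - y * Complex.I)) / ((s : ℂ) - (x - y * Complex.I)) * g s)
      / (1 + (x : ℂ) ^ 2) = 2 * Complex.I * y * (poissonWeight y x s • g s) := by
    rw [← sub_mul, mul_div_right_comm, kernel_sub_div_one_add_sq hy, Complex.real_smul]
    ring
  rw [hrep _ hw₁, hrep _ hw₂, ← integral_const_mul, ← funext hK, integral_div,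
    integral_sub (integrable_one_add_mul_div_sub_mul hg hw₁)
      (integrable_one_add_mul_div_sub_mul hg hw₂)]
  have : (1 + (x : ℂ) ^ 2) ≠ 0 := by exact_mod_cast (by positivity : 1 + x ^ 2 ≠ 0)
  push_cast
  field_simp
  ring

variable [SFinite μ]

lemma integrable_integral_poissonWeight_smul (hg : Integrable g μ) (hy : 0 < y) :
    Integrable fun x => ∫ s, poissonWeight y x s • g s ∂μ :=
  (integrable_prod_smul_of_integral_le (poissonWeight_nonneg y)
    (continuous_poissonWeight hy.ne').aestronglyMeasurable (integrable_poissonWeight hy.ne')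
    (integral_poissonWeight_le hy) hg).integral_prod_left

lemma HasRepresentingMeasure.integrable_sub_div_one_add_sq
    (hrep : HasRepresentingMeasure φ μ g lam) (hg : Integrable g μ) (hy : 0 < y) :
    Integrable fun x : ℝ => (φ (x + y * Complex.I) - φ (x - y * Complex.I)) / (1 + (x : ℂ) ^ 2) :=
  ((integrable_ofReal_inv_one_add_sq.const_mul _).add
    ((integrable_integral_poissonWeight_smul hg hy).const_mul _)).congr
    (ae_of_all _ fun x => (hrep.sub_div_one_add_sq_eq hg hy.ne' x).symm)

lemma HasRepresentingMeasure.integral_norm_sub_div_le (hrep : HasRepresentingMeasure φ μ g lam)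
    (hg : Integrable g μ) (hy : 0 < y) :
    ∫ x : ℝ, ‖φ (x + y * Complex.I) - φ (x - y * Complex.I)‖ / (1 + x ^ 2)
      ≤ 2 * π * y * ‖lam‖ + 2 * π * (y + 1) * ∫ s, ‖g s‖ ∂μ := by
  have hint := (integrable_integral_poissonWeight_smul hg hy).norm.const_mul (2 * y)
  have hnorm (x : ℝ) : ‖φ (x + y * Complex.I) - φ (x - y * Complex.I)‖ / (1 + x ^ 2)
      ≤ 2 * y * ‖lam‖ * (1 + x ^ 2)⁻¹ + 2 * y * ‖∫ s, poissonWeight y x s • g s ∂μ‖ := by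
    rw [← norm_one_add_ofReal_sq, ← norm_div, hrep.sub_div_one_add_sq_eq hg hy.ne' x]
    refine (norm_add_le _ _).trans_eq ?_
    simp [abs_of_pos hy]
  calc _ ≤ ∫ x : ℝ, (2 * y * ‖lam‖ * (1 + x ^ 2)⁻¹
          + 2 * y * ‖∫ s, poissonWeight y x s • g s ∂μ‖) :=
        integral_mono_of_nonneg (ae_of_all _ fun x => by positivity)
          ((integrable_inv_one_add_sq.const_mul _).add hint) (ae_of_all _ hnorm)
    _ ≤ 2 * y * ‖lam‖ * π + 2 * y * (π * (y + 1) / y * ∫ s, ‖g s‖ ∂μ) := by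
        rw [integral_add (integrable_inv_one_add_sq.const_mul _) hint,
          integral_const_mul, integral_const_mul, integral_univ_inv_one_add_sq]
        gcongr
        exact integral_norm_integral_smul_le (poissonWeight_nonneg y)
          (continuous_poissonWeight hy.ne').aestronglyMeasurable (integrable_poissonWeight hy.ne')
          (integral_poissonWeight_le hy) hg
    _ = _ := by field_simp

lemma HasRepresentingMeasure.integral_sub_div_one_add_sq (hrep : HasRepresentingMeasure φ μ g lam)
    (hg : Integrable g μ) (hy : 0 < y) :
    ∫ x : ℝ, (φ (x + y * Complex.I) - φ (x - y * Complex.I)) / (1 + (x : ℂ) ^ 2)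
      = 2 * π * Complex.I * lam * y + 2 * π * Complex.I * (y + 1) *
          ∫ s, (((s ^ 2 + 1) / (s ^ 2 + (y + 1) ^ 2) : ℝ) : ℂ) * g s ∂μ := by
  rw [integral_congr_ae (ae_of_all _ (hrep.sub_div_one_add_sq_eq hg hy.ne')),
    integral_add (integrable_ofReal_inv_one_add_sq.const_mul _)
      ((integrable_integral_poissonWeight_smul hg hy).const_mul _),
    integral_const_mul, integral_const_mul, integral_complex_ofReal, integral_univ_inv_one_add_sq,
    integral_integral_smul_swap (poissonWeight_nonneg y)
      (continuous_poissonWeight hy.ne').aestronglyMeasurable (integrable_poissonWeight hy.ne')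
      (integral_poissonWeight_le hy) hg]
  simp_rw [integral_poissonWeight hy, mul_smul, integral_smul, Complex.real_smul]
  have hy' : (y : ℂ) ≠ 0 := by exact_mod_cast hy.ne'
  generalize ∫ s, (((s ^ 2 + 1) / (s ^ 2 + (y + 1) ^ 2) : ℝ) : ℂ) * g s ∂μ = J
  push_cast
  field_simp

end Representation

/-- **Norm bound and exact value of the line integrals** (Proposition `preinversion`).
The complex measure `λ` is encoded by a finite positive measure `μ` with integrable
complex density `g`; its total variation satisfies `|λ|(ℝ) = ∫ |g| dμ` and its atomic
mass at `∞` is `lam`. -/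
theorem stmt15 (φ : ℂ → ℂ) (hφ : DifferentiableOn ℂ φ {z : ℂ | z.im ≠ 0})
    (μ : Measure ℝ) [IsFiniteMeasure μ] (g : ℝ → ℂ) (hg : Integrable g μ) (lam : ℂ)
    (hrep : ∀ w : ℂ, w.im ≠ 0 →
      φ w = (φ Complex.I + φ (-Complex.I)) / 2 + lam * w
        + ∫ s, ((1 + (s : ℂ) * w) / ((s : ℂ) - w)) * g s ∂μ) :
    ∀ y : ℝ, 0 < y →
      Continuous (fun x : ℝ =>
        (φ ((x : ℂ) + (y : ℂ) * Complex.I) - φ ((x : ℂ) - (y : ℂ) * Complex.I))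
          / (1 + (x : ℂ) ^ 2))
      ∧ Integrable (fun x : ℝ =>
          (φ ((x : ℂ) + (y : ℂ) * Complex.I) - φ ((x : ℂ) - (y : ℂ) * Complex.I))
            / (1 + (x : ℂ) ^ 2))
      ∧ (∫ x : ℝ, ‖φ ((x : ℂ) + (y : ℂ) * Complex.I)
              - φ ((x : ℂ) - (y : ℂ) * Complex.I)‖ / (1 + x ^ 2))
          ≤ 2 * Real.pi * y * ((∫ s, ‖g s‖ ∂μ) + ‖lam‖) + 2 * Real.pi * ∫ s, ‖g s‖ ∂μ
      ∧ (∫ x : ℝ,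
            (φ ((x : ℂ) + (y : ℂ) * Complex.I) - φ ((x : ℂ) - (y : ℂ) * Complex.I))
              / (1 + (x : ℂ) ^ 2))
          = 2 * Real.pi * Complex.I * lam * (y : ℂ)
            + 2 * Real.pi * Complex.I * ((y : ℂ) + 1) *
                ∫ s, ((((s : ℝ) ^ 2 + 1) / ((s : ℝ) ^ 2 + (y + 1) ^ 2) : ℝ) : ℂ) * g s ∂μ := by
  intro y hy
  exact ⟨continuous_sub_div_one_add_sq hφ.continuousOn hy.ne',
    HasRepresentingMeasure.integrable_sub_div_one_add_sq hrep hg hy,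
    (HasRepresentingMeasure.integral_norm_sub_div_le hrep hg hy).trans_eq (by ring),
    HasRepresentingMeasure.integral_sub_div_one_add_sq hrep hg hy⟩
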